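/- The formula Q → P is not provable in intuitionistic System F, where P = ∀X∀Y.(((X → Y) → X) → X) is Peirce's law and Q = P → ∀X.X. -/
import Mathlib


inductive Lam : Type
  | var : ℕ → Lam
  | app : Lam → Lam → Lam
  | lam : Lam → Lam
deriving DecidableEq

namespace Lam

/-- Lift (shift up by one) all de Bruijn indices ≥ d. -/
def lift (d : ℕ) : Lam → Lam
  | var n => if n < d then var n else var (n + 1)
  | app u v => app (lift d u) (lift d v)
  | lam u => lam (lift (d + 1) u)

/-- Capture-avoiding substitution of s for the de Bruijn index d. -/
def subst (d : ℕ) (s : Lam) : Lam → Lam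
  | var n => if n = d then s else if n < d then var n else var (n - 1)
  | app u v => app (subst d s u) (subst d s v)
  | lam u => lam (subst (d + 1) (lift 0 s) u)

/-- One-step β-reduction. -/
inductive Step : Lam → Lam → Prop
  | beta (u v : Lam) : Step (app (lam u) v) (subst 0 v u)
  | appL {u u' : Lam} (v : Lam) : Step u u' → Step (app u v) (app u' v)
  | appR (u : Lam) {v v' : Lam} : Step v v' → Step (app u v) (app u v')
  | lam {u u' : Lam} : Step u u' → Step (lam u) (lam u')

/-- β-equivalence: the reflexive-symmetric-transitive closure of β-reduction. -/
inductive BetaEq : Lam → Lam → Prop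
  | step {u v} : Step u v → BetaEq u v
  | refl (u) : BetaEq u u
  | symm {u v} : BetaEq u v → BetaEq v u
  | trans {u v w} : BetaEq u v → BetaEq v w → BetaEq u w

/-- One step of head reduction: contract the head redex. -/
inductive HeadStep : Lam → Lam → Prop
  | beta (u v : Lam) : HeadStep (app (lam u) v) (subst 0 v u)
  | appL {u u' : Lam} (v : Lam) : HeadStep u u' → (∀ w, u ≠ lam w) →
      HeadStep (app u v) (app u' v)
  | lam {u u' : Lam} : HeadStep u u' → HeadStep (lam u) (lam u')

/-- `Heads u v`: u head-reduces to v in finitely many steps. -/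
def Heads : Lam → Lam → Prop := Relation.ReflTransGen HeadStep

/-- A term is normal if it contains no β-redex. -/
def Normal (t : Lam) : Prop := ∀ u, ¬ Step t u

/-- All free de Bruijn indices of the term are < d. -/
def ClosedUnder : ℕ → Lam → Prop
  | d, var n => n < d
  | d, app u v => ClosedUnder d u ∧ ClosedUnder d v
  | d, lam u => ClosedUnder (d + 1) u

/-- A term is closed if it has no free variables. -/
def Closed (t : Lam) : Prop := ClosedUnder 0 t

/-- The de Bruijn index i occurs free in the term. -/
def FreeIn : ℕ → Lam → Prop
  | i, var n => n = i
  | i, app u v => FreeIn i u ∨ FreeIn i v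
  | i, lam u => FreeIn (i + 1) u

/-- n-fold application: (f^n x). -/
def iterApp : ℕ → Lam → Lam → Lam
  | 0, _, x => x
  | n + 1, f, x => app f (iterApp n f x)

/-- The n-th Church numeral λx.λf.(f^n x). -/
def church (n : ℕ) : Lam := lam (lam (iterApp n (var 0) (var 1)))

/-- T = λx.λy.x -/
def Ttm : Lam := lam (lam (var 1))

/-- F = λx.λy.y -/
def Ftm : Lam := lam (lam (var 0))

end Lam

/-- Types / formulas of System F, with de Bruijn type variables. -/
inductive Ty : Type
  | var : ℕ → Ty
  | bot : Ty
  | arrow : Ty → Ty → Ty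
  | all : Ty → Ty
deriving DecidableEq

namespace Ty

def lift (d : ℕ) : Ty → Ty
  | var n => if n < d then var n else var (n + 1)
  | bot => bot
  | arrow a b => arrow (lift d a) (lift d b)
  | all a => all (lift (d + 1) a)

/-- Capture-avoiding substitution of the type G for the type variable d: A[G/X]. -/
def subst (d : ℕ) (G : Ty) : Ty → Ty
  | var n => if n = d then G else if n < d then var n else var (n - 1)
  | bot => bot
  | arrow a b => arrow (subst d G a) (subst d G b)
  | all a => all (subst (d + 1) (lift 0 G) a)

/-- The type variable i occurs free in the type. -/
def Free : ℕ → Ty → Prop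
  | i, var n => n = i
  | _, bot => False
  | i, arrow a b => Free i a ∨ Free i b
  | i, all a => Free (i + 1) a

/-- ¬A := A → ⊥ -/
def neg (a : Ty) : Ty := arrow a bot

end Ty

/-- Curry-style System F typing: Γ ⊢_F t : A. -/
inductive Typing : List Ty → Lam → Ty → Prop
  | var {Γ : List Ty} {n : ℕ} {A : Ty} : Γ[n]? = some A → Typing Γ (Lam.var n) A
  | lam {Γ A B t} : Typing (A :: Γ) t B → Typing Γ (Lam.lam t) (Ty.arrow A B)
  | app {Γ A B u v} : Typing Γ u (Ty.arrow A B) → Typing Γ v A →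
      Typing Γ (Lam.app u v) B
  | allI {Γ A t} : Typing (Γ.map (Ty.lift 0)) t A → Typing Γ t (Ty.all A)
  | allE {Γ A t} (G : Ty) : Typing Γ t (Ty.all A) → Typing Γ t (Ty.subst 0 G A)

/-- Minimal second-order propositional logic (the logic of System F). -/
inductive Prov : List Ty → Ty → Prop
  | ax {Γ A} : A ∈ Γ → Prov Γ A
  | arrI {Γ A B} : Prov (A :: Γ) B → Prov Γ (Ty.arrow A B)
  | arrE {Γ A B} : Prov Γ (Ty.arrow A B) → Prov Γ A → Prov Γ B
  | allI {Γ A} : Prov (Γ.map (Ty.lift 0)) A → Prov Γ (Ty.all A)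
  | allE {Γ A} (G : Ty) : Prov Γ (Ty.all A) → Prov Γ (Ty.subst 0 G A)

/-- Classical second-order propositional logic F_C: F plus double-negation elimination. -/
inductive ProvC : List Ty → Ty → Prop
  | ax {Γ A} : A ∈ Γ → ProvC Γ A
  | arrI {Γ A B} : ProvC (A :: Γ) B → ProvC Γ (Ty.arrow A B)
  | arrE {Γ A B} : ProvC Γ (Ty.arrow A B) → ProvC Γ A → ProvC Γ B
  | allI {Γ A} : ProvC (Γ.map (Ty.lift 0)) A → ProvC Γ (Ty.all A)
  | allE {Γ A} (G : Ty) : ProvC Γ (Ty.all A) → ProvC Γ (Ty.subst 0 G A)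
  | dne {Γ A} : ProvC Γ (Ty.neg (Ty.neg A)) → ProvC Γ A

/-- The Gödel translation A ↦ A*. -/
def godel : Ty → Ty
  | Ty.var n => Ty.neg (Ty.var n)
  | Ty.bot => Ty.bot
  | Ty.arrow a b => Ty.arrow (godel a) (godel b)
  | Ty.all a => Ty.all (godel a)

/-- The type of booleans B = ∀X.(X → X → X). -/
def BoolTy : Ty := Ty.all (Ty.arrow (Ty.var 0) (Ty.arrow (Ty.var 0) (Ty.var 0)))

/-- The type of Church integers N = ∀X.(X → ((X → X) → X)). -/
def NatTy : Ty :=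
  Ty.all (Ty.arrow (Ty.var 0) (Ty.arrow (Ty.arrow (Ty.var 0) (Ty.var 0)) (Ty.var 0)))

/-- Peirce's law P = ∀X∀Y.(((X → Y) → X) → X). -/
def PeirceTy : Ty :=
  Ty.all (Ty.all (Ty.arrow (Ty.arrow (Ty.arrow (Ty.var 1) (Ty.var 0)) (Ty.var 1)) (Ty.var 1)))

/-- Q = P → ∀X.X. -/
def QTy : Ty := Ty.arrow PeirceTy (Ty.all (Ty.var 0))

section Sem
open TopologicalSpace

abbrev HH := TopologicalSpace.Opens ℝ

/-- Push `h` on the front of an environment. -/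
def econs (h : HH) (ρ : ℕ → HH) : ℕ → HH
  | 0 => h
  | n + 1 => ρ n

/-- Skip index `d` in an environment (semantic counterpart of `Ty.lift d`). -/
def eskip (d : ℕ) (ρ : ℕ → HH) : ℕ → HH :=
  fun n => if n < d then ρ n else ρ (n + 1)

/-- Insert `g` at index `d` (semantic counterpart of `Ty.subst d`). -/
def eins (d : ℕ) (g : HH) (ρ : ℕ → HH) : ℕ → HH :=
  fun n => if n = d then g else if n < d then ρ n else ρ (n - 1)

def evalTy (ρ : ℕ → HH) : Ty → HH
  | Ty.var n => ρ n
  | Ty.bot => ⊥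
  | Ty.arrow a b => evalTy ρ a ⇨ evalTy ρ b
  | Ty.all a => ⨅ h : HH, evalTy (econs h ρ) a

lemma econs_eskip (h : HH) (d : ℕ) (ρ : ℕ → HH) :
    econs h (eskip d ρ) = eskip (d + 1) (econs h ρ) := by
  funext n
  cases n with
  | zero => simp [econs, eskip]
  | succ m =>
    simp only [econs, eskip]
    by_cases hm : m < d
    · simp [hm, Nat.succ_lt_succ hm, econs]
    · simp [hm, fun h' => hm (Nat.lt_of_succ_lt_succ h'), econs]

lemma evalTy_lift (A : Ty) : ∀ (d : ℕ) (ρ : ℕ → HH),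
    evalTy ρ (Ty.lift d A) = evalTy (eskip d ρ) A := by
  induction A with
  | var n =>
    intro d ρ
    by_cases h : n < d <;> simp [Ty.lift, evalTy, eskip, h]
  | bot => intro d ρ; rfl
  | arrow a b iha ihb => intro d ρ; simp [Ty.lift, evalTy, iha, ihb]
  | all a ih =>
    intro d ρ
    simp only [Ty.lift, evalTy]
    refine iInf_congr fun h => ?_
    rw [ih, econs_eskip]

lemma econs_eins (h g : HH) (d : ℕ) (ρ : ℕ → HH) :
    econs h (eins d g ρ) = eins (d + 1) g (econs h ρ) := by
  funext n
  cases n with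
  | zero => simp [econs, eins]
  | succ m =>
    simp only [econs, eins]
    by_cases he : m = d
    · simp [he]
    · have : ¬ (m + 1 = d + 1) := fun h' => he (Nat.succ_injective h')
      by_cases hl : m < d
      · simp [he, this, hl, Nat.succ_lt_succ hl, econs]
      · have h2 : ¬ (m + 1 < d + 1) := fun h' => hl (Nat.lt_of_succ_lt_succ h')
        obtain ⟨k, rfl⟩ := Nat.exists_eq_succ_of_ne_zero (show m ≠ 0 by omega)
        simp [he, this, h2, hl, econs]

lemma evalTy_subst (A : Ty) : ∀ (d : ℕ) (G : Ty) (ρ : ℕ → HH),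
    evalTy ρ (Ty.subst d G A) = evalTy (eins d (evalTy ρ G) ρ) A := by
  induction A with
  | var n =>
    intro d G ρ
    by_cases he : n = d
    · simp [Ty.subst, evalTy, eins, he]
    · by_cases hl : n < d
      · simp [Ty.subst, evalTy, eins, he, hl]
      · simp [Ty.subst, evalTy, eins, he, hl]
  | bot => intro d G ρ; rfl
  | arrow a b iha ihb => intro d G ρ; simp [Ty.subst, evalTy, iha, ihb]
  | all a ih =>
    intro d G ρ
    simp only [Ty.subst, evalTy]
    refine iInf_congr fun h => ?_
    rw [ih]
    have hG : evalTy (econs h ρ) (Ty.lift 0 G) = evalTy ρ G := by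
      rw [evalTy_lift]
      have h0 : eskip 0 (econs h ρ) = ρ := by funext n; simp [eskip, econs]
      rw [h0]
    rw [hG, econs_eins]

theorem sound {Γ A} (hp : Prov Γ A) :
    ∀ (ρ : ℕ → HH) (c : HH), (∀ B ∈ Γ, c ≤ evalTy ρ B) → c ≤ evalTy ρ A := by
  induction hp with
  | ax hmem => intro ρ c hc; exact hc _ hmem
  | arrI _ ih =>
    intro ρ c hc
    rw [evalTy, le_himp_iff]
    refine ih ρ _ fun B hB => ?_
    rcases List.mem_cons.mp hB with rfl | hB
    · exact inf_le_right
    · exact le_trans inf_le_left (hc _ hB)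
  | arrE _ _ ihu ihv =>
    intro ρ c hc
    have h1 := ihu ρ c hc
    have h2 := ihv ρ c hc
    rw [evalTy] at h1
    calc c ≤ (evalTy ρ _ ⇨ evalTy ρ _) ⊓ evalTy ρ _ := le_inf h1 h2
    _ ≤ _ := himp_inf_le
  | allI _ ih =>
    intro ρ c hc
    rw [evalTy]
    refine le_iInf fun h => ?_
    refine ih (econs h ρ) c fun B hB => ?_
    simp only [List.mem_map] at hB
    obtain ⟨B', hB', rfl⟩ := hB
    rw [evalTy_lift]
    have : eskip 0 (econs h ρ) = ρ := by funext n; simp [eskip, econs]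
    rw [this]
    exact hc _ hB'
  | allE G _ ih =>
    intro ρ c hc
    rw [evalTy_subst]
    have h1 := ih ρ c hc
    rw [evalTy] at h1
    have he : econs (evalTy ρ G) ρ = eins 0 (evalTy ρ G) ρ := by
      funext n; cases n <;> simp [econs, eins]
    calc c ≤ _ := h1
    _ ≤ evalTy (econs (evalTy ρ G) ρ) _ := iInf_le _ _
    _ = _ := by rw [he]

end Sem

section Counter
open TopologicalSpace

/-- The complement of a point, as an open set. -/
def Upt (p : ℝ) : HH := ⟨{p}ᶜ, isOpen_compl_singleton⟩

lemma Upt_himp_bot (p : ℝ) : (Upt p ⇨ (⊥ : HH)) = ⊥ := by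
  refine le_antisymm ?_ bot_le
  have h1 : (Upt p ⇨ ⊥) ⊓ Upt p ≤ (⊥ : HH) := himp_inf_le
  have hsub : ((Upt p ⇨ ⊥ : HH) : Set ℝ) ⊆ {p} := by
    intro x hx
    by_contra hxp
    have hx2 : x ∈ ((Upt p ⇨ ⊥ : HH) ⊓ Upt p : HH) := by
      constructor
      · exact hx
      · exact hxp
    exact (h1 hx2 : x ∈ ((⊥ : HH) : Set ℝ))
  intro x hx
  have hopen : ((Upt p ⇨ ⊥ : HH) : Set ℝ) ⊆ interior {p} :=
    (Upt p ⇨ ⊥ : HH).isOpen.subset_interior_iff.mpr hsub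
  have hint : interior ({p} : Set ℝ) = ∅ := by
    rw [interior_eq_empty_iff_dense_compl]
    exact dense_compl_singleton p
  have := hopen hx
  rw [hint] at this
  exact this

lemma Peirce_eval (ρ : ℕ → HH) : evalTy ρ PeirceTy = ⊥ := by
  refine le_antisymm ?_ bot_le
  have h2 : evalTy ρ PeirceTy ≤ ⨅ p : ℝ, Upt p := by
    refine le_iInf fun p => ?_
    have s1 : evalTy ρ PeirceTy ≤
        ⨅ y : HH, ((Upt p ⇨ y) ⇨ Upt p) ⇨ Upt p := by
      have := iInf_le (fun x : HH =>
        ⨅ y : HH, evalTy (econs y (econs x ρ))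
          (Ty.arrow (Ty.arrow (Ty.arrow (Ty.var 1) (Ty.var 0)) (Ty.var 1)) (Ty.var 1))) (Upt p)
      simpa [PeirceTy, evalTy, econs] using this
    have s2 : (⨅ y : HH, ((Upt p ⇨ y) ⇨ Upt p) ⇨ Upt p) ≤
        ((Upt p ⇨ ⊥) ⇨ Upt p) ⇨ Upt p := iInf_le _ ⊥
    calc evalTy ρ PeirceTy ≤ _ := s1
    _ ≤ ((Upt p ⇨ ⊥) ⇨ Upt p) ⇨ Upt p := s2
    _ = Upt p := by rw [Upt_himp_bot, bot_himp, top_himp]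
  refine h2.trans ?_
  intro x hx
  have hle : (⨅ p : ℝ, Upt p) ≤ Upt x := iInf_le _ x
  exact (hle hx : x ∈ (Upt x : Set ℝ)) rfl


/-- Q → P is not provable in intuitionistic System F. -/
theorem QP_not_provable : ¬ Prov [] (Ty.arrow QTy PeirceTy) := by
  intro hp
  set ρ : ℕ → HH := fun _ => ⊥ with hρ
  have hs := sound hp ρ ⊤ (by simp)
  have hP : evalTy ρ PeirceTy = ⊥ := Peirce_eval ρ
  have hAll : evalTy ρ (Ty.all (Ty.var 0)) = (⊥ : HH) := by
    refine le_antisymm ?_ bot_le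
    exact iInf_le (fun h : HH => evalTy (econs h ρ) (Ty.var 0)) ⊥
  have hQ : evalTy ρ QTy = ⊤ := by
    show evalTy ρ PeirceTy ⇨ evalTy ρ (Ty.all (Ty.var 0)) = ⊤
    rw [hP, hAll, himp_self]
  have hs2 : (⊤ : HH) ≤ ⊥ := by
    have : evalTy ρ (Ty.arrow QTy PeirceTy) = evalTy ρ QTy ⇨ evalTy ρ PeirceTy := rfl
    rw [this, hQ, hP, top_himp] at hs
    exact hs
  exact (hs2 (show (0:ℝ) ∈ ((⊤ : HH) : Set ℝ) from trivial) : (0:ℝ) ∈ ((⊥ : HH) : Set ℝ))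

end Counter
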